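/- arXiv:1901.06041 — 3 statements merged into one kernel-verified Lean document; each statement's English description precedes it below -/
import Mathlib

section
/- Let a \in \mathbb{R}, N \ge 1 an integer, and let r be a function analytic on the unit disc |y|<1. Then the ODE -y\,\varphi'(y) + \left(\frac{a y}{(1-y)^2} - N\right)\varphi(y) = r(y) has exactly one solution analytic at y = 0, namely \varphi(y) = -y^{-N} e^{a/(1-y)} \int_0^y \eta^{N-1} e^{-a/(1-\eta)}\, r(\eta)\, d\eta, and this solution is analytic on the whole unit disc. -/
/-!
Put `h(z) = e^{-a/(1-z)} r(z)`. The substitution `η = s y` turns `∫₀^y η^{N-1} h(η) dη` into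
`y^N G(y)` with `G(y) = ∫₀¹ s^{N-1} h(s y) ds`; differentiating under the integral sign shows
that `G` is holomorphic on the whole disc, and integrating `d/ds (s^N h(s y))` gives
`y G'(y) + N G(y) = h(y)`, so `φ = -e^{a/(1-y)} G` is an analytic solution.
For uniqueness, `y^N e^{-a/(1-y)}` is an integrating factor: it turns the difference `u` of two
solutions into a function with zero derivative, which vanishes at `0` because `N ≥ 1`. Hence
`u = 0` away from `0`, and at `0` the equation reads `-N u(0) = 0`.
-/

open Complex Metric intervalIntegral

/-- `y ^ (n + 1) * radialMoment n h y = ∫₀^y ηⁿ h(η) dη`, integrating along `[0, y]`. -/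
noncomputable def radialMoment (n : ℕ) (h : ℂ → ℂ) (y : ℂ) : ℂ :=
  ∫ s in (0 : ℝ)..1, (s : ℂ) ^ n * h (s * y)

section RadialMoment

variable {U : Set ℂ} {h : ℂ → ℂ} {y : ℂ}

theorem StarConvex.ofReal_mul_mem (hU : StarConvex ℝ 0 U) (hy : y ∈ U) {s : ℝ}
    (hs : s ∈ Set.Icc (0 : ℝ) 1) : (s : ℂ) * y ∈ U := by
  simpa [Complex.real_smul] using hU.smul_mem hy hs.1 hs.2

theorem continuousOn_radialMoment_integrand (hh : ContinuousOn h U) (hU : StarConvex ℝ 0 U)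
    (hy : y ∈ U) (n : ℕ) :
    ContinuousOn (fun s : ℝ => (s : ℂ) ^ n * h (s * y)) (Set.Icc 0 1) :=
  (continuous_ofReal.pow n).continuousOn.mul <|
    hh.comp (by fun_prop) fun _ hs => hU.ofReal_mul_mem hy hs

theorem hasDerivAt_radialMoment (hUo : IsOpen U) (hU : StarConvex ℝ 0 U)
    (hh : DifferentiableOn ℂ h U) (hy : y ∈ U) (n : ℕ) :
    HasDerivAt (radialMoment n h)
      (∫ s in (0 : ℝ)..1, (s : ℂ) ^ (n + 1) * deriv h (s * y)) y := by
  have hh' : ContinuousOn (deriv h) U := (hh.deriv hUo).continuousOn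
  obtain ⟨ε, hε, hεU⟩ := nhds_basis_closedBall.mem_iff.mp (hUo.mem_nhds hy)
  -- the segments from `0` to the points of `closedBall y ε` sweep out a compact subset of `U`
  set K := (fun p : ℝ × ℂ => (p.1 : ℂ) * p.2) '' (Set.Icc 0 1 ×ˢ closedBall y ε)
  have hK : IsCompact K := (isCompact_Icc.prod (isCompact_closedBall y ε)).image (by fun_prop)
  have hKU : K ⊆ U := by
    rintro _ ⟨⟨s, x⟩, ⟨hs, hx⟩, rfl⟩
    exact hU.ofReal_mul_mem (hεU hx) hs
  obtain ⟨C, hC⟩ := hK.exists_bound_of_continuousOn (hh'.mono hKU)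
  have hIoc : Set.uIoc (0 : ℝ) 1 ⊆ Set.Icc 0 1 := by
    rw [Set.uIoc_of_le zero_le_one]; exact Set.Ioc_subset_Icc_self
  refine (hasDerivAt_integral_of_dominated_loc_of_deriv_le (bound := fun _ => C)
    (F := fun x (s : ℝ) => (s : ℂ) ^ n * h (s * x))
    (F' := fun x (s : ℝ) => (s : ℂ) ^ (n + 1) * deriv h (s * x))
    (closedBall_mem_nhds y hε) ?_ ?_ ?_ ?_ intervalIntegrable_const ?_).2
  · filter_upwards [closedBall_mem_nhds y hε] with x hx
    exact ((continuousOn_radialMoment_integrand hh.continuousOn hU (hεU hx) n).mono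
      hIoc).aestronglyMeasurable measurableSet_uIoc
  · exact (continuousOn_radialMoment_integrand hh.continuousOn hU hy n).intervalIntegrable_of_Icc
      zero_le_one
  · exact ((continuousOn_radialMoment_integrand hh' hU hy (n + 1)).mono
      hIoc).aestronglyMeasurable measurableSet_uIoc
  · refine Filter.Eventually.of_forall fun s hs x hx => ?_
    have hs' : s ∈ Set.Icc (0 : ℝ) 1 := hIoc hs
    have hs1 : ‖(s : ℂ)‖ ≤ 1 := by rw [norm_real, Real.norm_of_nonneg hs'.1]; exact hs'.2
    calc ‖(s : ℂ) ^ (n + 1) * deriv h (s * x)‖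
        = ‖(s : ℂ)‖ ^ (n + 1) * ‖deriv h (s * x)‖ := by rw [norm_mul, norm_pow]
      _ ≤ 1 * C := by
        gcongr
        · exact pow_le_one₀ (norm_nonneg _) hs1
        · exact hC _ ⟨(s, x), ⟨hs', hx⟩, rfl⟩
      _ = C := one_mul C
  · refine Filter.Eventually.of_forall fun s hs x hx => ?_
    have hd := (hh.differentiableAt (hUo.mem_nhds (hU.ofReal_mul_mem (hεU hx) (hIoc hs))))
    have := (hd.hasDerivAt.comp x ((hasDerivAt_id x).const_mul (s : ℂ))).const_mul
      ((s : ℂ) ^ n)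
    exact this.congr_deriv (by ring)

theorem mul_deriv_radialMoment_add (hUo : IsOpen U) (hU : StarConvex ℝ 0 U)
    (hh : DifferentiableOn ℂ h U) (hy : y ∈ U) (n : ℕ) :
    y * deriv (radialMoment n h) y + (n + 1) * radialMoment n h y = h y := by
  have hint := (continuousOn_radialMoment_integrand hh.continuousOn hU hy
    n).intervalIntegrable_of_Icc (μ := MeasureTheory.volume) zero_le_one
  have hint' := (continuousOn_radialMoment_integrand (hh.deriv hUo).continuousOn hU hy
    (n + 1)).intervalIntegrable_of_Icc (μ := MeasureTheory.volume) zero_le_one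
  have hFTC := integral_eq_sub_of_hasDerivAt
    (f := fun s : ℝ => (s : ℂ) ^ (n + 1) * h (s * y))
    (f' := fun s : ℝ =>
      y * ((s : ℂ) ^ (n + 1) * deriv h (s * y)) + (n + 1) * ((s : ℂ) ^ n * h (s * y)))
    (fun s hs => ?_) ((hint'.const_mul y).add (hint.const_mul _))
  · rw [integral_add (hint'.const_mul y) (hint.const_mul _), integral_const_mul,
      integral_const_mul] at hFTC
    rw [(hasDerivAt_radialMoment hUo hU hh hy n).deriv, radialMoment, hFTC]
    simp
  · rw [Set.uIcc_of_le zero_le_one] at hs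
    have hd := (hh.differentiableAt (hUo.mem_nhds (hU.ofReal_mul_mem hy hs))).hasDerivAt
    have := ((hasDerivAt_pow (n + 1) (s : ℂ)).mul
      (hd.comp (s : ℂ) ((hasDerivAt_id (s : ℂ)).mul_const y))).comp_ofReal
    exact this.congr_deriv <| by
      simp only [Function.comp_apply, id, Nat.add_sub_cancel]; push_cast; ring

theorem differentiableOn_radialMoment (hUo : IsOpen U) (hU : StarConvex ℝ 0 U)
    (hh : DifferentiableOn ℂ h U) (n : ℕ) : DifferentiableOn ℂ (radialMoment n h) U :=
  fun _ hy => (hasDerivAt_radialMoment hUo hU hh hy n).differentiableAt.differentiableWithinAt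

end RadialMoment

noncomputable def odeOperator (a : ℂ) (N : ℕ) (φ : ℂ → ℂ) (y : ℂ) : ℂ :=
  -y * deriv φ y + (a * y / (1 - y) ^ 2 - N) * φ y

/-- For `y ≠ 0` this is `-y^{-(n+1)} e^{a/(1-y)} ∫₀^y ηⁿ e^{-a/(1-η)} r(η) dη`. -/
noncomputable def odeSolution (a : ℂ) (n : ℕ) (r : ℂ → ℂ) (y : ℂ) : ℂ :=
  -(exp (a / (1 - y)) * radialMoment n (fun z => exp (-a / (1 - z)) * r z) y)

section ODE

variable {U : Set ℂ} {a : ℂ} {y : ℂ}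

theorem hasDerivAt_exp_div_one_sub (c : ℂ) (hy : y ≠ 1) :
    HasDerivAt (fun z => exp (c / (1 - z))) (exp (c / (1 - y)) * (c / (1 - y) ^ 2)) y := by
  have := ((hasDerivAt_const y c).div ((hasDerivAt_id' y).const_sub 1)
    (sub_ne_zero.mpr hy.symm)).cexp
  exact this.congr_deriv (by simp)

theorem differentiableOn_exp_div_one_sub_mul (hU1 : (1 : ℂ) ∉ U) (c : ℂ) {r : ℂ → ℂ}
    (hr : DifferentiableOn ℂ r U) : DifferentiableOn ℂ (fun z => exp (c / (1 - z)) * r z) U :=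
  fun z hz => ((hasDerivAt_exp_div_one_sub c (ne_of_mem_of_not_mem hz hU1)).differentiableAt
    |>.differentiableWithinAt).mul (hr z hz)

theorem odeOperator_sub {N : ℕ} {φ ψ : ℂ → ℂ} (hφ : DifferentiableAt ℂ φ y)
    (hψ : DifferentiableAt ℂ ψ y) :
    odeOperator a N (φ - ψ) y = odeOperator a N φ y - odeOperator a N ψ y := by
  simp only [odeOperator, deriv_sub hφ hψ, Pi.sub_apply]
  ring

theorem hasDerivAt_integratingFactor_mul {n : ℕ} {φ : ℂ → ℂ}
    (hφ : DifferentiableAt ℂ φ y) (hy : y ≠ 1) :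
    HasDerivAt (fun z => z ^ (n + 1) * exp (-a / (1 - z)) * φ z)
      (-(y ^ n * exp (-a / (1 - y))) * odeOperator a (n + 1) φ y) y := by
  have := ((hasDerivAt_pow (n + 1) y).mul (hasDerivAt_exp_div_one_sub (-a) hy)).mul
    hφ.hasDerivAt
  refine this.congr_deriv ?_
  simp only [odeOperator, Pi.mul_apply, Nat.add_sub_cancel]
  push_cast
  ring

theorem eqOn_zero_of_odeOperator_eq_zero (hUo : IsOpen U) (hUc : IsPreconnected U)
    (hU0 : (0 : ℂ) ∈ U) (hU1 : (1 : ℂ) ∉ U) {n : ℕ} {φ : ℂ → ℂ}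
    (hφ : DifferentiableOn ℂ φ U) (hode : ∀ y ∈ U, odeOperator a (n + 1) φ y = 0) :
    Set.EqOn φ 0 U := by
  have hderiv : ∀ y ∈ U, HasDerivAt (fun z => z ^ (n + 1) * exp (-a / (1 - z)) * φ z) 0 y :=
    fun y hy => by
      simpa [hode y hy] using hasDerivAt_integratingFactor_mul (a := a) (n := n)
        (hφ.differentiableAt (hUo.mem_nhds hy)) (ne_of_mem_of_not_mem hy hU1)
  intro y hy
  rcases eq_or_ne y 0 with rfl | hy0
  · have h0 := hode 0 hU0
    simp only [odeOperator, neg_zero, zero_mul, mul_zero, zero_div, zero_sub, zero_add] at h0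
    exact (mul_eq_zero.mp h0).resolve_left
      (neg_ne_zero.mpr (Nat.cast_ne_zero.mpr n.succ_ne_zero))
  · have hconst := hUo.is_const_of_deriv_eq_zero hUc
      (fun z hz => (hderiv z hz).differentiableAt.differentiableWithinAt)
      (fun z hz => (hderiv z hz).deriv) hy hU0
    simpa [hy0, exp_ne_zero] using hconst

theorem hasDerivAt_odeSolution (hUo : IsOpen U) (hU : StarConvex ℝ 0 U) (hU1 : (1 : ℂ) ∉ U)
    (n : ℕ) {r : ℂ → ℂ} (hr : DifferentiableOn ℂ r U) (hy : y ∈ U) :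
    HasDerivAt (odeSolution a n r)
      (-(exp (a / (1 - y)) * (a / (1 - y) ^ 2) *
          radialMoment n (fun z => exp (-a / (1 - z)) * r z) y +
        exp (a / (1 - y)) * deriv (radialMoment n fun z => exp (-a / (1 - z)) * r z) y)) y := by
  have hmoment := hasDerivAt_radialMoment hUo hU
    (differentiableOn_exp_div_one_sub_mul hU1 (-a) hr) hy n
  rw [hmoment.deriv]
  exact ((hasDerivAt_exp_div_one_sub a (ne_of_mem_of_not_mem hy hU1)).mul hmoment).neg

theorem differentiableOn_odeSolution (hUo : IsOpen U) (hU : StarConvex ℝ 0 U)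
    (hU1 : (1 : ℂ) ∉ U) (n : ℕ) {r : ℂ → ℂ} (hr : DifferentiableOn ℂ r U) :
    DifferentiableOn ℂ (odeSolution a n r) U :=
  fun _ hy => (hasDerivAt_odeSolution hUo hU hU1 n hr hy).differentiableAt.differentiableWithinAt

theorem odeOperator_odeSolution (hUo : IsOpen U) (hU : StarConvex ℝ 0 U) (hU1 : (1 : ℂ) ∉ U)
    (n : ℕ) {r : ℂ → ℂ} (hr : DifferentiableOn ℂ r U) (hy : y ∈ U) :
    odeOperator a (n + 1) (odeSolution a n r) y = r y := by
  have hmoment := mul_deriv_radialMoment_add hUo hU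
    (differentiableOn_exp_div_one_sub_mul hU1 (-a) hr) hy n
  have hexp : exp (a / (1 - y)) * exp (-a / (1 - y)) = 1 := by
    rw [← exp_add, neg_div, add_neg_cancel, exp_zero]
  rw [odeOperator, (hasDerivAt_odeSolution hUo hU hU1 n hr hy).deriv, odeSolution]
  push_cast
  linear_combination exp (a / (1 - y)) * hmoment + r y * hexp

end ODE

/-- For `a ∈ ℝ`, `N ≥ 1` and `r` analytic on the unit disc, the ODE
`-y φ'(y) + (a y/(1-y)² - N) φ(y) = r(y)` has exactly one solution analytic on
the unit disc (in particular analytic at `0`), and away from `0` it is given by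
`φ(y) = -y^{-N} e^{a/(1-y)} ∫₀^y η^{N-1} e^{-a/(1-η)} r(η) dη`, the contour
integral being parameterized along the segment from `0` to `y`. -/
theorem inhomogeneous_ode_unique_analytic_solution (a : ℝ) (N : ℕ) (hN : 1 ≤ N)
    (r : ℂ → ℂ) (hr : AnalyticOnNhd ℂ r (Metric.ball (0 : ℂ) 1)) :
    ∃ φ : ℂ → ℂ,
      (AnalyticOnNhd ℂ φ (Metric.ball (0 : ℂ) 1) ∧
        (∀ y ∈ Metric.ball (0 : ℂ) 1,
          -y * deriv φ y + ((a : ℂ) * y / (1 - y) ^ 2 - (N : ℂ)) * φ y = r y)) ∧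
      (∀ y ∈ Metric.ball (0 : ℂ) 1, y ≠ 0 →
        φ y = -(y ^ (-(N : ℤ))) * Complex.exp ((a : ℂ) / (1 - y)) *
          (y * ∫ s in (0 : ℝ)..1,
            ((s : ℂ) * y) ^ (N - 1) * Complex.exp (-(a : ℂ) / (1 - (s : ℂ) * y))
              * r ((s : ℂ) * y))) ∧
      (∀ ψ : ℂ → ℂ,
        AnalyticOnNhd ℂ ψ (Metric.ball (0 : ℂ) 1) →
        (∀ y ∈ Metric.ball (0 : ℂ) 1,
          -y * deriv ψ y + ((a : ℂ) * y / (1 - y) ^ 2 - (N : ℂ)) * ψ y = r y) →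
        ∀ y ∈ Metric.ball (0 : ℂ) 1, ψ y = φ y) := by
  obtain ⟨n, rfl⟩ : ∃ n, N = n + 1 := ⟨N - 1, by omega⟩
  have h1 : (1 : ℂ) ∉ ball (0 : ℂ) 1 := by simp
  have hstar : StarConvex ℝ 0 (ball (0 : ℂ) 1) :=
    (convex_ball 0 1).starConvex (mem_ball_self one_pos)
  have hsol := differentiableOn_odeSolution (a := a) isOpen_ball hstar h1 n hr.differentiableOn
  have hode : ∀ y ∈ ball (0 : ℂ) 1, odeOperator a (n + 1) (odeSolution a n r) y = r y :=
    fun y hy => odeOperator_odeSolution isOpen_ball hstar h1 n hr.differentiableOn hy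
  refine ⟨odeSolution a n r, ⟨hsol.analyticOnNhd isOpen_ball, hode⟩, fun y _ hy0 => ?_,
    fun ψ hψ hψode y hy => ?_⟩
  · have hmoment : (∫ s in (0 : ℝ)..1, ((s : ℂ) * y) ^ (n + 1 - 1) *
          exp (-(a : ℂ) / (1 - (s : ℂ) * y)) * r ((s : ℂ) * y)) =
        y ^ n * radialMoment n (fun z => exp (-(a : ℂ) / (1 - z)) * r z) y := by
      rw [radialMoment, ← integral_const_mul]
      refine integral_congr fun s _ => ?_
      simp only [Nat.add_sub_cancel, mul_pow]
      ring
    rw [hmoment, odeSolution, zpow_neg, zpow_natCast]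
    field_simp
    ring
  · have hdiff := hψ.differentiableOn.sub hsol
    have := eqOn_zero_of_odeOperator_eq_zero isOpen_ball (convex_ball 0 1).isPreconnected
      (mem_ball_self one_pos) h1 hdiff fun z hz => by
        rw [odeOperator_sub (hψ z hz).differentiableAt
          (hsol.differentiableAt (isOpen_ball.mem_nhds hz)), hode z hz]
        exact sub_eq_zero.mpr (hψode z hz)
    exact sub_eq_zero.mp (this hy)
end

section
/- Fix a > 0. On the domain t \in \mathbb{C}\setminus(-\infty,2\sqrt{a}], let \eta(t) be defined by \frac{2}{3}\eta(t)^{3/2} = t\log\frac{t+\sqrt{t^2-4a}}{2\sqrt{a}} - \sqrt{t^2-4a} with \eta(t)>0 for t>2\sqrt{a}. Then \Phi(t) := -\frac{t\sqrt{t^2-4a}}{4\sqrt{\eta(t)}} satisfies the differential equation \sqrt{\eta}\left(\frac{\Phi\eta'}{2\eta} + \Phi' - \frac{\eta}{3} + \frac{t\eta'}{2}\right) = -\frac{a}{\sqrt{t^2-4a}} for t > 2\sqrt{a}. -/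
open Real Filter Topology

/-! Write `σ = √(t² - 4a)` and `L = log ((t + σ) / (2√a))`. The right-hand side of the defining
relation for `η` has derivative exactly `L`, so `√η η' = L`; differentiating
`Φ √η = -tσ/4` gives `Φ' √η + Φ η' / (2√η) = -(σ + t²/σ)/4`. Multiplying out the left-hand side
of the equation and replacing `η^{3/2}` by `(3/2)(tL - σ)`, the `L`-terms cancel and what is
left is `(σ² - t²)/(4σ) = -a/σ`. -/

lemma rpow_three_halves_eq_mul_sqrt {x : ℝ} (hx : 0 ≤ x) : x ^ ((3 : ℝ) / 2) = x * √x := by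
  rw [show (3 : ℝ) / 2 = 1 + 1 / 2 by norm_num, rpow_add' hx (by norm_num), rpow_one,
    sqrt_eq_rpow]

lemma HasDerivAt.two_thirds_mul_rpow_three_halves {f : ℝ → ℝ} {f' t : ℝ}
    (hf : HasDerivAt f f' t) :
    HasDerivAt (fun x => 2 / 3 * f x ^ ((3 : ℝ) / 2)) (√(f t) * f') t := by
  refine ((hf.rpow_const (p := 3 / 2) (Or.inr (by norm_num))).const_mul (2 / 3 : ℝ)).congr_deriv
    ?_
  rw [sqrt_eq_rpow]
  norm_num
  ring

lemma hasDerivAt_sqrt_sq_sub {c t : ℝ} (h : 0 < t ^ 2 - c) :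
    HasDerivAt (fun x => √(x ^ 2 - c)) (t / √(t ^ 2 - c)) t := by
  refine (((hasDerivAt_pow 2 t).sub_const c).sqrt h.ne').congr_deriv ?_
  field_simp
  ring

lemma hasDerivAt_mul_log_add_sqrt_sub_sqrt {c k t : ℝ} (hk : k ≠ 0) (ht : 0 < t)
    (h : 0 < t ^ 2 - c) :
    HasDerivAt (fun x => x * log ((x + √(x ^ 2 - c)) / k) - √(x ^ 2 - c))
      (log ((t + √(t ^ 2 - c)) / k)) t := by
  have hs : 0 < √(t ^ 2 - c) := sqrt_pos.2 h
  have hσ := hasDerivAt_sqrt_sq_sub h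
  have hsum : HasDerivAt (fun x => x + √(x ^ 2 - c)) (1 + t / √(t ^ 2 - c)) t :=
    (hasDerivAt_id' t).add hσ
  -- `(1 + t/σ) / (t + σ) = 1/σ`, so the product rule's `t · (log …)'` cancels `σ' = t/σ`.
  have hlog := (hsum.div_const k).log (div_ne_zero (by positivity) hk)
  refine (((hasDerivAt_id' t).mul hlog).sub hσ).congr_deriv ?_
  field_simp
  ring

lemma hasDerivAt_mul_sqrt_sq_sub {c t : ℝ} (h : 0 < t ^ 2 - c) :
    HasDerivAt (fun x => x * √(x ^ 2 - c)) (√(t ^ 2 - c) + t ^ 2 / √(t ^ 2 - c)) t := by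
  refine ((hasDerivAt_id' t).mul (hasDerivAt_sqrt_sq_sub h)).congr_deriv ?_
  ring

lemma shift_equation_of_derivative_relations {a t s S E L Φ Φ' η' : ℝ}
    (hs : 0 < s) (hS : 0 < S) (hS_sq : S ^ 2 = E) (hs_sq : s ^ 2 = t ^ 2 - 4 * a) (hη' : S * η' = L)
    (hη : 2 / 3 * (E * S) = t * L - s)
    (hΦ' : Φ' * S + Φ * (η' / (2 * S)) = -(s + t ^ 2 / s) / 4) :
    S * (Φ * η' / (2 * E) + Φ' - E / 3 + t * η' / 2) = -(a / s) := by
  subst hS_sq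
  field_simp at hΦ' ⊢
  linear_combination (3 / 4 : ℝ) * hΦ' + 3 * s * t * S * hη' - 3 * s * S * hη
    + (3 / 2 : ℝ) * S * hs_sq

/-- For `a > 0` let `η(t) > 0` on `t > 2√a` be defined by
`(2/3) η^{3/2} = t log((t+√(t²-4a))/(2√a)) - √(t²-4a)`, and set
`Φ(t) = - t√(t²-4a)/(4√(η t))`.  Then
`√η (Φη'/(2η) + Φ' - η/3 + tη'/2) = -a/√(t²-4a)` for `t > 2√a`. -/
theorem shift_function_equation (a : ℝ) (ha : 0 < a) (η Φ : ℝ → ℝ)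
    (hη_pos : ∀ t : ℝ, 2 * Real.sqrt a < t → 0 < η t)
    (hη_diff : ∀ t : ℝ, 2 * Real.sqrt a < t → DifferentiableAt ℝ η t)
    (hΦ_diff : ∀ t : ℝ, 2 * Real.sqrt a < t → DifferentiableAt ℝ Φ t)
    (hη_def : ∀ t : ℝ, 2 * Real.sqrt a < t →
      (2 / 3) * (η t) ^ ((3 : ℝ) / 2)
        = t * Real.log ((t + Real.sqrt (t ^ 2 - 4 * a)) / (2 * Real.sqrt a))
          - Real.sqrt (t ^ 2 - 4 * a))
    (hΦ_def : ∀ t : ℝ, 2 * Real.sqrt a < t →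
      Φ t = -(t * Real.sqrt (t ^ 2 - 4 * a)) / (4 * Real.sqrt (η t))) :
    ∀ t : ℝ, 2 * Real.sqrt a < t →
      Real.sqrt (η t) *
          (Φ t * deriv η t / (2 * η t) + deriv Φ t - η t / 3 + t * deriv η t / 2)
      = -(a / Real.sqrt (t ^ 2 - 4 * a)) := by
  intro t ht
  have ht0 : 0 < t := lt_of_le_of_lt (by positivity) ht
  have hdisc : 0 < t ^ 2 - 4 * a := by nlinarith [sq_sqrt ha.le, sqrt_nonneg a]
  have hpos := hη_pos t ht
  have hnear : ∀ᶠ x in 𝓝 t, 2 * √a < x := Ioi_mem_nhds ht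
  have hΦη : ∀ᶠ x in 𝓝 t, Φ x * √(η x) = -(x * √(x ^ 2 - 4 * a)) / 4 :=
    hnear.mono fun x hx => by
      rw [hΦ_def x hx]
      field_simp [(sqrt_pos.2 (hη_pos x hx)).ne']
  refine shift_equation_of_derivative_relations (L := log ((t + √(t ^ 2 - 4 * a)) / (2 * √a)))
    (sqrt_pos.2 hdisc) (sqrt_pos.2 hpos) (sq_sqrt hpos.le) (sq_sqrt hdisc.le) ?_ ?_ ?_
  · exact (hη_diff t ht).hasDerivAt.two_thirds_mul_rpow_three_halves.unique
      ((hasDerivAt_mul_log_add_sqrt_sub_sqrt (by positivity) ht0 hdisc).congr_of_eventuallyEq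
        (hnear.mono hη_def))
  · rw [← rpow_three_halves_eq_mul_sqrt hpos.le]
    exact hη_def t ht
  · exact ((hΦ_diff t ht).hasDerivAt.mul ((hη_diff t ht).hasDerivAt.sqrt hpos.ne')).unique
      (((hasDerivAt_mul_sqrt_sq_sub hdisc).neg.div_const 4).congr_of_eventuallyEq hΦη)
end

section
/- Fix a > 0 and r > 0. Suppose x = ny with complex y satisfying dist(y,[0,1]) > r, and suppose the sequence (w_k)_{k=1}^n satisfies w_1 = x - a and w_k = x - (k-1+a) - a(k-1)/w_{k-1}. Write w_k = (x-k)(1 + \delta_k) with \delta_k = \frac{1-a}{x-k} - \frac{ak}{(x-k)^2} + \varepsilon_k. Then there exist constants M_0, M_1, N > 0, depending only on a and r, such that |\delta_k| \le M_0/n and |\varepsilon_k| \le M_1/n^2 for all 1 \le k \le n and all n > N. In particular one may take M_0 = |1-a|/r + 3a/r^2 + a/r^3, M_1 = a(1+r+2rM_0)/r^3, and N = 2M_0. -/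
open Complex

/-!
Put `u_k = x - k`, so that `|u_k| > rn` for `0 ≤ k ≤ n`. Substituting `w_k = u_k (1 + δ_k)` into
the recursion gives the exact identity
`ε_{k+1} = a x / (u_{k+1}² u_k) + a k δ_k / (u_{k+1} u_k (1 + δ_k))`,
and `ε_1 = a / u_1²`. Once `|δ_k| ≤ M₀/n ≤ 1/2`, both terms are `O(1/n²)` because
`|x| ≤ |u_{k+1}| + n` and `k ≤ n`; conversely `δ_k = (1-a)/u_k - ak/u_k² + ε_k` turns
`|ε_k| ≤ M₁/n²` back into `|δ_k| ≤ M₀/n`, the condition `n > 2M₀` absorbing `M₁/n` into `M₀`.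
So the two bounds propagate together along `k`.
-/

theorem lt_norm_natCast_mul_sub_natCast {r : ℝ} {y : ℂ}
    (hy : r < Metric.infDist y ((fun t : ℝ => (t : ℂ)) '' Set.Icc 0 1)) {n j : ℕ}
    (hn : 0 < n) (hj : j ≤ n) : r * n < ‖(n : ℂ) * y - j‖ := by
  have hnR : (0 : ℝ) < n := Nat.cast_pos.2 hn
  have hmem : ((j / n : ℝ) : ℂ) ∈ (fun t : ℝ => (t : ℂ)) '' Set.Icc 0 1 :=
    ⟨j / n, ⟨by positivity, (div_le_one hnR).2 (by exact_mod_cast hj)⟩, rfl⟩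
  have hr : r < ‖y - ((j / n : ℝ) : ℂ)‖ := by
    rw [← dist_eq_norm]; exact hy.trans_le (Metric.infDist_le_dist_of_mem hmem)
  have hfactor : (n : ℂ) * y - j = n * (y - ((j / n : ℝ) : ℂ)) := by
    have : (n : ℂ) ≠ 0 := Nat.cast_ne_zero.2 hn.ne'
    push_cast; field_simp
  rw [hfactor, norm_mul, norm_natCast, mul_comm]
  exact mul_lt_mul_of_pos_left hr hnR

section NormBounds

variable {R : ℝ} {u v : ℂ}

theorem one_half_le_norm_one_add {δ : ℂ} (hδ : ‖δ‖ ≤ 1 / 2) : 1 / 2 ≤ ‖1 + δ‖ := by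
  have := norm_sub_norm_le (1 : ℂ) (-δ)
  rw [sub_neg_eq_add, norm_neg, norm_one] at this
  linarith

theorem norm_ofReal_mul_div_sq_mul_le {c m : ℝ} {x : ℂ} (hc : 0 ≤ c) (hm : 0 ≤ m) (hR : 0 < R)
    (hu : R ≤ ‖u‖) (hv : R ≤ ‖v‖) (hx : ‖x‖ ≤ ‖u‖ + m) :
    ‖(c : ℂ) * x / (u ^ 2 * v)‖ ≤ c / R ^ 2 + c * m / R ^ 3 :=
  have hu0 : 0 < ‖u‖ := hR.trans_le hu
  calc ‖(c : ℂ) * x / (u ^ 2 * v)‖ = c * ‖x‖ / (‖u‖ ^ 2 * ‖v‖) := by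
        rw [norm_div, norm_mul, norm_mul, norm_pow, norm_real, Real.norm_of_nonneg hc]
    _ ≤ c * (‖u‖ + m) / (‖u‖ ^ 2 * ‖v‖) := by gcongr
    _ = c / (‖u‖ * ‖v‖) + c * m / (‖u‖ ^ 2 * ‖v‖) := by field_simp
    _ ≤ c / (R * R) + c * m / (R ^ 2 * R) := by gcongr
    _ = c / R ^ 2 + c * m / R ^ 3 := by ring

theorem norm_div_mul_mul_one_add_le {z δ : ℂ} (hR : 0 < R) (hu : R ≤ ‖u‖) (hv : R ≤ ‖v‖)
    (hδ : ‖δ‖ ≤ 1 / 2) : ‖z / (u * v * (1 + δ))‖ ≤ 2 * ‖z‖ / R ^ 2 :=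
  calc ‖z / (u * v * (1 + δ))‖ = ‖z‖ / (‖u‖ * ‖v‖ * ‖1 + δ‖) := by
        rw [norm_div, norm_mul, norm_mul]
    _ ≤ ‖z‖ / (R * R * (1 / 2)) := by gcongr; exact one_half_le_norm_one_add hδ
    _ = 2 * ‖z‖ / R ^ 2 := by field_simp

end NormBounds

namespace Charlier

noncomputable def delta (w : ℕ → ℂ) (x : ℂ) (k : ℕ) : ℂ := w k / (x - k) - 1

noncomputable def eps (a : ℝ) (w : ℕ → ℂ) (x : ℂ) (k : ℕ) : ℂ :=
  delta w x k - (1 - (a : ℂ)) / (x - k) + (a : ℂ) * k / (x - k) ^ 2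

noncomputable def deltaBound (a r : ℝ) : ℝ := |1 - a| / r + 3 * a / r ^ 2 + a / r ^ 3

noncomputable def epsBound (a r : ℝ) : ℝ := a * (1 + r + 2 * r * deltaBound a r) / r ^ 3

section Bounds

variable {a r : ℝ}

theorem deltaBound_pos (ha : 0 < a) (hr : 0 < r) : 0 < deltaBound a r := by
  unfold deltaBound; positivity

theorem epsBound_pos (ha : 0 < a) (hr : 0 < r) : 0 < epsBound a r := by
  unfold epsBound; have := deltaBound_pos ha hr; positivity

theorem div_sq_le_epsBound (ha : 0 < a) (hr : 0 < r) : a / r ^ 2 ≤ epsBound a r := by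
  have hsplit : epsBound a r = a / r ^ 2 + a * (1 + 2 * r * deltaBound a r) / r ^ 3 := by
    unfold epsBound; field_simp; ring
  have := deltaBound_pos ha hr
  rw [hsplit]
  exact le_add_of_nonneg_right (by positivity)

theorem epsBound_div_le {n : ℝ} (ha : 0 < a) (hr : 0 < r) (hn1 : 1 ≤ n)
    (hn : 2 * deltaBound a r < n) : epsBound a r / n ≤ 2 * a / r ^ 2 + a / r ^ 3 := by
  rw [div_le_iff₀ (by linarith), epsBound, div_le_iff₀ (by positivity)]
  have hr3 : (2 * a / r ^ 2 + a / r ^ 3) * n * r ^ 3 = (2 * a * r + a) * n := by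
    field_simp
  rw [hr3]
  nlinarith [mul_nonneg ha.le (sub_nonneg.2 hn1),
    mul_nonneg (mul_nonneg ha.le hr.le) (sub_nonneg.2 hn1),
    mul_nonneg (mul_nonneg ha.le hr.le) (sub_nonneg.2 hn.le)]

end Bounds

section Recursion

variable {a : ℝ} {w : ℕ → ℂ} {x : ℂ} {k : ℕ}

theorem eps_one (hw1 : w 1 = x - a) (hx : x - 1 ≠ 0) : eps a w x 1 = a / (x - 1) ^ 2 := by
  simp only [eps, delta, Nat.cast_one, hw1]
  field_simp
  ring

theorem eps_succ (hrec : w (k + 1) = x - (k + a) - a * k / w k) (hu : x - (k + 1) ≠ 0)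
    (hv : x - k ≠ 0) (hδ : 1 + delta w x k ≠ 0) :
    eps a w x (k + 1) = a * x / ((x - (k + 1)) ^ 2 * (x - k))
      + a * k * delta w x k / ((x - (k + 1)) * (x - k) * (1 + delta w x k)) := by
  have hwk : w k = (x - k) * (1 + delta w x k) := by
    rw [delta]; field_simp; ring
  generalize delta w x k = δ at hwk hδ ⊢
  simp only [eps, delta, Nat.cast_succ, hrec, hwk]
  field_simp
  ring

end Recursion

section Estimates

variable {a r : ℝ} {n k : ℕ} {w : ℕ → ℂ} {x : ℂ}

theorem norm_delta_le (ha : 0 < a) (hr : 0 < r) (hn : 2 * deltaBound a r < n) (hk : k ≤ n)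
    (hxk : r * n < ‖x - k‖) (hε : ‖eps a w x k‖ ≤ epsBound a r / n ^ 2) :
    ‖delta w x k‖ ≤ deltaBound a r / n := by
  have hnR : (0 : ℝ) < n := (mul_pos two_pos (deltaBound_pos ha hr)).trans hn
  have hn1 : (1 : ℝ) ≤ n := Nat.one_le_cast.2 (Nat.cast_pos.1 hnR)
  have hdecomp : delta w x k = (1 - (a : ℂ)) / (x - k) - a * k / (x - k) ^ 2 + eps a w x k := by
    rw [eps]; ring
  have h1 : ‖(1 - (a : ℂ)) / (x - k)‖ ≤ |1 - a| / (r * n) := by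
    rw [norm_div, ← ofReal_one, ← ofReal_sub, norm_real, Real.norm_eq_abs]
    gcongr
  have h2 : ‖(a : ℂ) * k / (x - k) ^ 2‖ ≤ a * n / (r * n) ^ 2 := by
    rw [norm_div, norm_mul, norm_pow, norm_real, Real.norm_of_nonneg ha.le, norm_natCast]
    gcongr
  have h3 := epsBound_div_le ha hr hn1 hn
  calc ‖delta w x k‖ ≤ |1 - a| / (r * n) + a * n / (r * n) ^ 2 + epsBound a r / n ^ 2 := by
        rw [hdecomp]
        exact (norm_add_le _ _).trans (add_le_add ((norm_sub_le _ _).trans (add_le_add h1 h2)) hε)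
    _ = (|1 - a| / r + a / r ^ 2 + epsBound a r / n) / n := by field_simp
    _ ≤ deltaBound a r / n := by
        gcongr
        have : deltaBound a r = |1 - a| / r + a / r ^ 2 + (2 * a / r ^ 2 + a / r ^ 3) := by
          unfold deltaBound; ring
        linarith

theorem norm_eps_succ_le (ha : 0 < a) (hr : 0 < r) (hn : 2 * deltaBound a r < n)
    (hk : k + 1 ≤ n) (hu : r * n < ‖x - (k + 1 : ℕ)‖) (hv : r * n < ‖x - k‖)
    (hrec : w (k + 1) = x - (k + a) - a * k / w k) (hδ : ‖delta w x k‖ ≤ deltaBound a r / n) :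
    ‖eps a w x (k + 1)‖ ≤ epsBound a r / n ^ 2 := by
  have hnR : (0 : ℝ) < n := (mul_pos two_pos (deltaBound_pos ha hr)).trans hn
  have hR : 0 < r * n := mul_pos hr hnR
  have hkn : (k + 1 : ℝ) ≤ n := by exact_mod_cast hk
  push_cast at hu
  have hδ_half : ‖delta w x k‖ ≤ 1 / 2 := hδ.trans (by rw [div_le_iff₀ hnR]; linarith)
  have hx : ‖x‖ ≤ ‖x - (k + 1)‖ + n :=
    calc ‖x‖ ≤ ‖x - (k + 1)‖ + ‖(k : ℂ) + 1‖ := by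
          simpa using norm_add_le (x - (k + 1)) ((k : ℂ) + 1)
      _ ≤ ‖x - (k + 1)‖ + n := by rw [← Nat.cast_succ, norm_natCast]; push_cast; linarith
  have hkδ : ‖(a : ℂ) * k * delta w x k‖ ≤ a * deltaBound a r :=
    calc ‖(a : ℂ) * k * delta w x k‖ = a * k * ‖delta w x k‖ := by
          rw [norm_mul, norm_mul, norm_real, Real.norm_of_nonneg ha.le, norm_natCast]
      _ ≤ a * n * (deltaBound a r / n) := by gcongr; linarith
      _ = a * deltaBound a r := by field_simp
  rw [eps_succ hrec (norm_pos_iff.1 (hR.trans hu)) (norm_pos_iff.1 (hR.trans hv))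
    (norm_pos_iff.1 (one_half_pos.trans_le (one_half_le_norm_one_add hδ_half)))]
  calc _ ≤ (a / (r * n) ^ 2 + a * n / (r * n) ^ 3) + 2 * (a * deltaBound a r) / (r * n) ^ 2 :=
        (norm_add_le _ _).trans (add_le_add
          (norm_ofReal_mul_div_sq_mul_le ha.le hnR.le hR hu.le hv.le hx)
          ((norm_div_mul_mul_one_add_le hR hu.le hv.le hδ_half).trans (by gcongr)))
    _ = epsBound a r / n ^ 2 := by rw [epsBound]; field_simp; ring

theorem norm_eps_le (ha : 0 < a) (hr : 0 < r) (hn : 2 * deltaBound a r < n)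
    (hdist : ∀ j ≤ n, r * n < ‖x - j‖) (hw1 : w 1 = x - a)
    (hrec : ∀ k, 1 ≤ k → w (k + 1) = x - (k + a) - a * k / w k) :
    ∀ k, 1 ≤ k → k ≤ n → ‖eps a w x k‖ ≤ epsBound a r / n ^ 2 := by
  have hnR : (0 : ℝ) < n := (mul_pos two_pos (deltaBound_pos ha hr)).trans hn
  intro k hk
  induction k, hk using Nat.le_induction with
  | base =>
    intro h1n
    have hx1 : r * n < ‖x - 1‖ := by simpa using hdist 1 h1n
    rw [eps_one hw1 (norm_pos_iff.1 ((mul_pos hr hnR).trans hx1)), norm_div, norm_pow, norm_real,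
      Real.norm_of_nonneg ha.le]
    calc a / ‖x - 1‖ ^ 2 ≤ a / (r * n) ^ 2 := by gcongr
      _ = a / r ^ 2 / n ^ 2 := by ring
      _ ≤ epsBound a r / n ^ 2 := by gcongr; exact div_sq_le_epsBound ha hr
  | succ k hk ih =>
    intro hkn
    have hk' : k ≤ n := k.le_succ.trans hkn
    have hδ := norm_delta_le ha hr hn hk' (hdist k hk') (ih hk')
    exact norm_eps_succ_le ha hr hn hkn (hdist _ hkn) (hdist k hk') (hrec k hk) hδ

end Estimates

end Charlier

/-- Error bounds for the continued-fraction factors `w_k` of the Charlier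
polynomials: with `x = ny`, `dist(y,[0,1]) > r`, `w₁ = x - a`,
`w_k = x - (k-1+a) - a(k-1)/w_{k-1}`, writing
`w_k = (x-k)(1 + δ_k)` and `δ_k = (1-a)/(x-k) - ak/(x-k)² + ε_k`, there are
constants `M₀, M₁, N > 0` depending only on `a` and `r` — explicitly
`M₀ = |1-a|/r + 3a/r² + a/r³`, `M₁ = a(1+r+2rM₀)/r³`, `N = 2M₀` — with
`|δ_k| ≤ M₀/n` and `|ε_k| ≤ M₁/n²` for `1 ≤ k ≤ n`, `n > N`. -/
theorem wk_error_bounds (a r : ℝ) (ha : 0 < a) (hr : 0 < r) :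
    ∃ M₀ M₁ N : ℝ, 0 < M₀ ∧ 0 < M₁ ∧ 0 < N ∧
      M₀ = |1 - a| / r + 3 * a / r ^ 2 + a / r ^ 3 ∧
      M₁ = a * (1 + r + 2 * r * M₀) / r ^ 3 ∧
      N = 2 * M₀ ∧
      ∀ n : ℕ, N < (n : ℝ) →
      ∀ y : ℂ, r < Metric.infDist y ((fun t : ℝ => (t : ℂ)) '' Set.Icc (0 : ℝ) 1) →
      ∀ w : ℕ → ℂ,
        w 1 = (n : ℂ) * y - a →
        (∀ k : ℕ, 2 ≤ k →
          w k = (n : ℂ) * y - ((k : ℂ) - 1 + a) - a * ((k : ℂ) - 1) / w (k - 1)) →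
        ∀ k : ℕ, 1 ≤ k → k ≤ n →
          ‖w k / ((n : ℂ) * y - k) - 1‖ ≤ M₀ / n ∧
          ‖w k / ((n : ℂ) * y - k) - 1
              - (1 - (a : ℂ)) / ((n : ℂ) * y - k)
              + (a : ℂ) * k / ((n : ℂ) * y - k) ^ 2‖ ≤ M₁ / (n : ℝ) ^ 2 := by
  have hM₀ := Charlier.deltaBound_pos ha hr
  refine ⟨Charlier.deltaBound a r, Charlier.epsBound a r, 2 * Charlier.deltaBound a r, hM₀,
    Charlier.epsBound_pos ha hr, by positivity, rfl, rfl, rfl, ?_⟩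
  intro n hn y hy w hw1 hrec k hk1 hkn
  have hn0 : 0 < n := Nat.cast_pos.1 ((mul_pos two_pos hM₀).trans hn)
  have hdist : ∀ j ≤ n, r * n < ‖(n : ℂ) * y - j‖ := fun j hj =>
    lt_norm_natCast_mul_sub_natCast hy hn0 hj
  have hrec' : ∀ k, 1 ≤ k → w (k + 1) = n * y - (k + a) - a * k / w k := fun k _ => by
    simpa using hrec (k + 1) (by omega)
  have hε := Charlier.norm_eps_le ha hr hn hdist hw1 hrec' k hk1 hkn
  exact ⟨Charlier.norm_delta_le ha hr hn hkn (hdist k hkn) hε, hε⟩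
end
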